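/- arXiv:1510.06743 — 3 statements merged into one kernel-verified Lean document; each statement's English description precedes it below -/
import Mathlib

section
/- Let l ≥ 1, let 0 < ε ≤ 1, and let Ext: {0,1}^{n_1}×⋯×{0,1}^{n_l} → {0,1}^m be a (k_1,…,k_l,ε) l-source extractor. Then Ext is a (k_1+log₂(1/ε),…,k_l+log₂(1/ε),(l+1)ε) classical-proof l-source extractor in the Markov model; explicitly: for every joint distribution of finite random variables (X_1,…,X_l,Z), with X_i taking values in {0,1}^{n_i}, such that for every i ∈ {1,…,l} the variable X_i is conditionally independent of (X_j)_{j≠i} given Z, and such that H_min(X_i|Z) ≥ k_i + log₂(1/ε) for every i, one has (1/2)∑_{y∈{0,1}^m, z} |Pr[Ext(X_1,…,X_l)=y, Z=z] − 2^{−m}·Pr[Z=z]| ≤ (l+1)ε. -/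
open Kronecker Matrix
open scoped ComplexOrder

/-!
Conditionally on `Z = z`, the Markov condition makes the sources independent: the slice
`q · z` is, up to normalisation, the product of its marginals. On every slice in which each
source has min-entropy at least `k i`, the extractor property therefore bounds the error by
`ε · Pr[Z = z]`. Since `H_min(X_i | Z) ≥ k i + log(1/ε)`, Markov's inequality shows that the
slices in which `X_i` has min-entropy below `k i` have total probability at most `ε`; a union
bound over the `l` sources accounts for the remaining `l ε`.
-/

open Finset

section Markov

variable {ι : Type*} [Fintype ι] [DecidableEq ι] {X : ι → Type*} [∀ i, Fintype (X i)]
  [∀ i, DecidableEq (X i)]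

def marginal (f : (∀ i, X i) → ℝ) (i : ι) (a : X i) : ℝ :=
  ∑ x ∈ univ.filter (fun x => x i = a), f x

def marginalOn (f : (∀ i, X i) → ℝ) (T : Finset ι) (x : ∀ i, X i) : ℝ :=
  ∑ x' ∈ univ.filter (fun x' => ∀ j ∈ T, x' j = x j), f x'

/-- Independence of each coordinate from the others under the unnormalized weight `f`, with
denominators cleared. -/
def IsMarkov (f : (∀ i, X i) → ℝ) : Prop :=
  ∀ i x, f x * ∑ x', f x' =
    marginal f i (x i) * ∑ x' ∈ univ.filter (fun x' => ∀ j, j ≠ i → x' j = x j), f x'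

theorem marginalOn_empty (f : (∀ i, X i) → ℝ) (x : ∀ i, X i) :
    marginalOn f ∅ x = ∑ x', f x' := by
  simp [marginalOn]

theorem marginalOn_univ (f : (∀ i, X i) → ℝ) (x : ∀ i, X i) : marginalOn f univ x = f x := by
  simp [marginalOn, ← funext_iff, filter_eq']

theorem marginal_nonneg {f : (∀ i, X i) → ℝ} (hf : ∀ x, 0 ≤ f x) (i : ι) (a : X i) :
    0 ≤ marginal f i a :=
  sum_nonneg fun x _ => hf x

theorem sum_marginal (f : (∀ i, X i) → ℝ) (i : ι) : ∑ a, marginal f i a = ∑ x, f x :=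
  sum_fiberwise univ (fun x : ∀ i, X i => x i) f

namespace IsMarkov

variable {f : (∀ i, X i) → ℝ}

theorem marginalOn_mul_sum (hf : IsMarkov f) {T : Finset ι} {i : ι} (hi : i ∈ T)
    (x : ∀ i, X i) :
    marginalOn f T x * ∑ x', f x' = marginal f i (x i) * marginalOn f (T.erase i) x := by
  calc marginalOn f T x * ∑ x', f x'
      = ∑ x' ∈ univ.filter (fun x' : ∀ i, X i => ∀ j ∈ T, x' j = x j), marginal f i (x i) *
          ∑ x'' ∈ univ.filter (fun x'' : ∀ i, X i => ∀ j, j ≠ i → x'' j = x' j), f x'' := by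
        rw [marginalOn, sum_mul]
        refine sum_congr rfl fun x' hx' => ?_
        rw [hf i x', (mem_filter.1 hx').2 i hi]
    _ = marginal f i (x i) *
        ∑ x'' ∈ univ.filter (fun x'' : ∀ i, X i => ∀ j ∈ T.erase i, x'' j = x j),
          ∑ _x' ∈ {Function.update x'' i (x i)}, f x'' := by
        rw [← mul_sum]
        congr 1
        refine sum_comm' fun (x' x'' : ∀ i, X i) => ?_
        simp only [mem_filter, mem_univ, true_and, mem_singleton, mem_erase]
        constructor
        · rintro ⟨hT, hoff⟩
          refine ⟨funext fun j => ?_, fun j ⟨hji, hj⟩ => (hoff j hji).trans (hT j hj)⟩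
          by_cases hji : j = i
          · subst hji
            simp [hT j hi]
          · simp [hji, hoff j hji]
        · rintro ⟨rfl, h⟩
          refine ⟨fun j hj => ?_, fun j hji => (Function.update_of_ne hji _ _).symm⟩
          by_cases hji : j = i
          · subst hji
            simp
          · rw [Function.update_of_ne hji]
            exact h j ⟨hji, hj⟩
    _ = marginal f i (x i) * marginalOn f (T.erase i) x := by
        simp only [sum_singleton, marginalOn]

theorem marginalOn_mul_pow_card (hf : IsMarkov f) (T : Finset ι) (x : ∀ i, X i) :
    marginalOn f T x * (∑ x', f x') ^ #T = (∑ x', f x') * ∏ i ∈ T, marginal f i (x i) := by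
  induction T using Finset.induction_on with
  | empty => simp [marginalOn_empty]
  | insert i T hiT ih =>
    have h := hf.marginalOn_mul_sum (mem_insert_self i T) x
    rw [erase_insert hiT] at h
    rw [card_insert_of_notMem hiT, pow_succ, prod_insert hiT]
    linear_combination (∑ x', f x') ^ #T * h + marginal f i (x i) * ih

theorem div_sum_eq_prod (hf : IsMarkov f) (hS : ∑ x', f x' ≠ 0) (x : ∀ i, X i) :
    f x / ∑ x', f x' = ∏ i, marginal f i (x i) / ∑ x', f x' := by
  have h := hf.marginalOn_mul_pow_card univ x
  rw [marginalOn_univ, card_univ] at h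
  rw [prod_div_distrib, prod_const, card_univ, div_eq_div_iff hS (pow_ne_zero _ hS)]
  linear_combination h

end IsMarkov

end Markov

theorem rpow_neg_add_logb_one_div {b : ℝ} (hb : 1 < b) (k : ℝ) {ε : ℝ} (hε : 0 < ε) :
    b ^ (-(k + Real.logb b (1 / ε))) = b ^ (-k) * ε := by
  rw [one_div, Real.logb_inv, neg_add, neg_neg, Real.rpow_add (by linarith),
    Real.rpow_logb (by linarith) hb.ne' hε]

/-- Markov's inequality for the set where `g` exceeds `c * P`. -/
theorem sum_ite_lt_le {Z : Type*} [Fintype Z] {g P : Z → ℝ} {c ε : ℝ} (hc : 0 < c)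
    (hg : ∀ z, 0 ≤ g z) (h : ∑ z, g z ≤ c * ε) :
    ∑ z, (if c * P z < g z then P z else 0) ≤ ε := by
  refine le_of_mul_le_mul_left (le_trans ?_ h) hc
  rw [mul_sum]
  refine sum_le_sum fun z _ => ?_
  split_ifs with hz
  · exact hz.le
  · simpa using hg z

section DistFromUniform

variable {α Y : Type*} [Fintype α] [Fintype Y] [DecidableEq Y]

/-- Statistical distance of the push-forward of the unnormalized weight `w` under `Ext` from the
uniform weight of the same total mass. -/
noncomputable def distFromUniform (Ext : α → Y) (w : α → ℝ) : ℝ :=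
  (1 / 2) * ∑ y, |∑ x ∈ univ.filter (fun x => Ext x = y), w x
    - (Fintype.card Y : ℝ)⁻¹ * ∑ x, w x|

theorem distFromUniform_div_const (Ext : α → Y) (w : α → ℝ) {c : ℝ} (hc : 0 < c) :
    distFromUniform Ext (fun x => w x / c) = distFromUniform Ext w / c := by
  simp only [distFromUniform, ← sum_div, ← mul_div_assoc, ← sub_div, abs_div, abs_of_pos hc]

theorem distFromUniform_le_sum (Ext : α → Y) {w : α → ℝ} (hw : ∀ x, 0 ≤ w x) :
    distFromUniform Ext w ≤ ∑ x, w x := by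
  have hmass : 0 ≤ ∑ x, w x := sum_nonneg fun x _ => hw x
  have hcard : (Fintype.card Y : ℝ) * (Fintype.card Y : ℝ)⁻¹ ≤ 1 := mul_inv_le_one
  calc distFromUniform Ext w
      ≤ (1 / 2) * ∑ y, (∑ x ∈ univ.filter (fun x => Ext x = y), w x
          + (Fintype.card Y : ℝ)⁻¹ * ∑ x, w x) := by
        refine mul_le_mul_of_nonneg_left (sum_le_sum fun y _ => ?_) (by norm_num)
        refine (abs_sub _ _).trans_eq ?_
        rw [abs_of_nonneg (sum_nonneg fun x _ => hw x), abs_of_nonneg (by positivity)]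
    _ = (1 / 2) * (∑ x, w x + (Fintype.card Y : ℝ) * (Fintype.card Y : ℝ)⁻¹ * ∑ x, w x) := by
        rw [sum_add_distrib, sum_fiberwise, sum_const, card_univ, nsmul_eq_mul, mul_assoc]
    _ ≤ ∑ x, w x := by linarith [mul_le_mul_of_nonneg_right hcard hmass]

end DistFromUniform

section Extractor

variable {ι : Type*} [Fintype ι] [DecidableEq ι] {X : ι → Type*} [∀ i, Fintype (X i)]
  {Y : Type*} [Fintype Y] [DecidableEq Y]

theorem distFromUniform_prod (Ext : (∀ i, X i) → Y) {p : ∀ i, X i → ℝ}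
    (hp : ∀ i, ∑ a, p i a = 1) :
    distFromUniform Ext (fun x => ∏ i, p i (x i)) = (1 / 2) * ∑ y,
      |∑ x ∈ univ.filter (fun x => Ext x = y), ∏ i, p i (x i) - (Fintype.card Y : ℝ)⁻¹| := by
  rw [distFromUniform, ← Fintype.prod_sum]
  simp only [hp, prod_const_one, mul_one]

variable [∀ i, DecidableEq (X i)] [∀ i, Nonempty (X i)]

/-- `Ext` is a `(k, ε)` multi-source extractor: on independent sources of min-entropy
`H_min(X_i) ≥ k i` its output is `ε`-close to uniform. -/
def IsExtractor (Ext : (∀ i, X i) → Y) (k : ι → ℝ) (ε : ℝ) : Prop :=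
  ∀ p : ∀ i, X i → ℝ, (∀ i a, 0 ≤ p i a) → (∀ i, ∑ a, p i a = 1) →
    (∀ i, univ.sup' univ_nonempty (p i) ≤ (2 : ℝ) ^ (-k i)) →
    distFromUniform Ext (fun x => ∏ i, p i (x i)) ≤ ε

variable {Ext : (∀ i, X i) → Y} {k : ι → ℝ} {ε : ℝ} {f : (∀ i, X i) → ℝ}

theorem IsExtractor.distFromUniform_le_of_isMarkov (hExt : IsExtractor Ext k ε)
    (hf0 : ∀ x, 0 ≤ f x) (hf : IsMarkov f)
    (hmarg : ∀ i a, marginal f i a ≤ (2 : ℝ) ^ (-k i) * ∑ x, f x) :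
    distFromUniform Ext f ≤ ε * ∑ x, f x := by
  rcases (sum_nonneg fun x _ => hf0 x : 0 ≤ ∑ x, f x).eq_or_lt with hS | hS
  · simpa [← hS] using distFromUniform_le_sum Ext hf0
  set p : ∀ i, X i → ℝ := fun i a => marginal f i a / ∑ x, f x
  have hprod : (fun x => ∏ i, p i (x i)) = fun x => f x / ∑ x, f x :=
    funext fun x => (hf.div_sum_eq_prod hS.ne' x).symm
  have hp := hExt p (fun i a => div_nonneg (marginal_nonneg hf0 i a) hS.le)
    (fun i => by rw [← sum_div, sum_marginal, div_self hS.ne'])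
    (fun i => sup'_le _ _ fun a _ => (div_le_iff₀ hS).2 (hmarg i a))
  rwa [hprod, distFromUniform_div_const Ext f hS, div_le_iff₀ hS] at hp

noncomputable def lowEntropyMass (k : ι → ℝ) (f : (∀ i, X i) → ℝ) (i : ι) : ℝ :=
  if (2 : ℝ) ^ (-k i) * ∑ x, f x < univ.sup' univ_nonempty (marginal f i) then ∑ x, f x else 0

theorem IsExtractor.distFromUniform_le_add (hExt : IsExtractor Ext k ε) (hε : 0 ≤ ε)
    (hf0 : ∀ x, 0 ≤ f x) (hf : IsMarkov f) :
    distFromUniform Ext f ≤ ε * ∑ x, f x + ∑ i, lowEntropyMass k f i := by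
  have hS : 0 ≤ ∑ x, f x := sum_nonneg fun x _ => hf0 x
  have hlow : ∀ i, 0 ≤ lowEntropyMass k f i := fun i => ite_nonneg hS le_rfl
  by_cases hbad : ∃ i, (2 : ℝ) ^ (-k i) * ∑ x, f x < univ.sup' univ_nonempty (marginal f i)
  · obtain ⟨i, hi⟩ := hbad
    have hi' := single_le_sum (fun j _ => hlow j) (mem_univ i)
    rw [lowEntropyMass, if_pos hi] at hi'
    linarith [distFromUniform_le_sum Ext hf0, mul_nonneg hε hS]
  · push Not at hbad
    have := hExt.distFromUniform_le_of_isMarkov hf0 hf fun i a =>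
      (le_sup' (marginal f i) (mem_univ a)).trans (hbad i)
    linarith [sum_nonneg fun i (_ : i ∈ univ) => hlow i]

end Extractor

theorem multi_source_extractor_classical_markov_general
    (l : ℕ) (n : Fin l → ℕ) (m : ℕ)
    (Ext : (∀ i, Fin (n i) → Bool) → (Fin m → Bool))
    (k : Fin l → ℝ) (ε : ℝ) (hε0 : 0 < ε)
    -- `Ext` is a `(k₁,…,k_l,ε)` `l`-source extractor:
    (hExt : ∀ p : ∀ i, (Fin (n i) → Bool) → ℝ,
      (∀ i x, 0 ≤ p i x) → (∀ i, (∑ x, p i x) = 1) →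
      (∀ i, Finset.univ.sup' Finset.univ_nonempty (p i) ≤ (2:ℝ) ^ (-(k i))) →
      (1/2) * ∑ y : Fin m → Bool,
        |(∑ x ∈ Finset.univ.filter (fun x : ∀ i, Fin (n i) → Bool => Ext x = y),
            ∏ i, p i (x i)) - ((2:ℝ)^m)⁻¹| ≤ ε) :
    -- then it is a classical-proof extractor in the Markov model:
    ∀ (Z : Type) [Fintype Z],
    ∀ q : (∀ i, Fin (n i) → Bool) → Z → ℝ,
      (∀ x z, 0 ≤ q x z) → (∑ x, ∑ z, q x z) = 1 →
      -- Markov model: each `X i` is conditionally independent of the others given `Z`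
      (∀ i x z, q x z * (∑ x', q x' z)
        = (∑ x' ∈ Finset.univ.filter (fun x' : ∀ j, Fin (n j) → Bool => x' i = x i), q x' z)
          * (∑ x' ∈ Finset.univ.filter
              (fun x' : ∀ j, Fin (n j) → Bool => ∀ j, j ≠ i → x' j = x j), q x' z)) →
      -- `H_min(X_i | Z) ≥ k_i + log₂(1/ε)`
      (∀ i, ∑ z, Finset.univ.sup' Finset.univ_nonempty
          (fun a : Fin (n i) → Bool =>
            ∑ x ∈ Finset.univ.filter (fun x : ∀ j, Fin (n j) → Bool => x i = a), q x z)
        ≤ (2:ℝ) ^ (-(k i + Real.logb 2 (1/ε)))) →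
      (1/2) * ∑ y : Fin m → Bool, ∑ z,
        |(∑ x ∈ Finset.univ.filter (fun x : ∀ i, Fin (n i) → Bool => Ext x = y), q x z)
          - ((2:ℝ)^m)⁻¹ * ∑ x, q x z|
        ≤ ((l : ℝ) + 1) * ε := by
  intro Z _ q hq0 hq1 hMarkov hmin
  have hExt' : IsExtractor Ext k ε := fun p hp0 hp1 hsup => by
    rw [distFromUniform_prod Ext hp1]
    simpa using hExt p hp0 hp1 hsup
  have hMarkov' (z : Z) : IsMarkov (q · z) := fun i x => by
    rw [marginal]
    convert hMarkov i x z using 4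
  have hmass : ∑ z, ∑ x, q x z = 1 := by rw [sum_comm, hq1]
  have hbad (i : Fin l) : ∑ z, lowEntropyMass k (q · z) i ≤ ε :=
    sum_ite_lt_le (by positivity)
      (fun z => (marginal_nonneg (hq0 · z) i _).trans (le_sup' _ (mem_univ default)))
      ((hmin i).trans_eq (rpow_neg_add_logb_one_div one_lt_two (k i) hε0))
  calc _ = ∑ z, distFromUniform Ext (q · z) := by
        rw [sum_comm, mul_sum]
        simp [distFromUniform]
    _ ≤ ∑ z, (ε * ∑ x, q x z + ∑ i, lowEntropyMass k (q · z) i) :=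
        sum_le_sum fun z _ => hExt'.distFromUniform_le_add hε0.le (hq0 · z) (hMarkov' z)
    _ ≤ ε * 1 + ∑ _i : Fin l, ε := by
        rw [sum_add_distrib, ← mul_sum, hmass, sum_comm]
        gcongr with i
        exact hbad i
    _ = ((l : ℝ) + 1) * ε := by simp; ring

theorem multi_source_extractor_classical_markov
    (l : ℕ) (hl : 1 ≤ l) (n : Fin l → ℕ) (m : ℕ)
    (Ext : (∀ i, Fin (n i) → Bool) → (Fin m → Bool))
    (k : Fin l → ℝ) (ε : ℝ) (hε0 : 0 < ε) (hε1 : ε ≤ 1)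
    -- `Ext` is a `(k₁,…,k_l,ε)` `l`-source extractor:
    (hExt : ∀ p : ∀ i, (Fin (n i) → Bool) → ℝ,
      (∀ i x, 0 ≤ p i x) → (∀ i, (∑ x, p i x) = 1) →
      (∀ i, Finset.univ.sup' Finset.univ_nonempty (p i) ≤ (2:ℝ) ^ (-(k i))) →
      (1/2) * ∑ y : Fin m → Bool,
        |(∑ x ∈ Finset.univ.filter (fun x : ∀ i, Fin (n i) → Bool => Ext x = y),
            ∏ i, p i (x i)) - ((2:ℝ)^m)⁻¹| ≤ ε) :
    -- then it is a classical-proof extractor in the Markov model: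
    ∀ (Z : Type) [Fintype Z],
    ∀ q : (∀ i, Fin (n i) → Bool) → Z → ℝ,
      (∀ x z, 0 ≤ q x z) → (∑ x, ∑ z, q x z) = 1 →
      -- Markov model: each `X i` is conditionally independent of the others given `Z`
      (∀ i x z, q x z * (∑ x', q x' z)
        = (∑ x' ∈ Finset.univ.filter (fun x' : ∀ j, Fin (n j) → Bool => x' i = x i), q x' z)
          * (∑ x' ∈ Finset.univ.filter
              (fun x' : ∀ j, Fin (n j) → Bool => ∀ j, j ≠ i → x' j = x j), q x' z)) →
      -- `H_min(X_i | Z) ≥ k_i + log₂(1/ε)`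
      (∀ i, ∑ z, Finset.univ.sup' Finset.univ_nonempty
          (fun a : Fin (n i) → Bool =>
            ∑ x ∈ Finset.univ.filter (fun x : ∀ j, Fin (n j) → Bool => x i = a), q x z)
        ≤ (2:ℝ) ^ (-(k i + Real.logb 2 (1/ε)))) →
      (1/2) * ∑ y : Fin m → Bool, ∑ z,
        |(∑ x ∈ Finset.univ.filter (fun x : ∀ i, Fin (n i) → Bool => Ext x = y), q x z)
          - ((2:ℝ)^m)⁻¹ * ∑ x, q x z|
        ≤ ((l : ℝ) + 1) * ε :=
  multi_source_extractor_classical_markov_general l n m Ext k ε hε0 hExt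
end

section
/- Let 0 < ε ≤ 1, let i ∈ {1,2}, and let Ext: {0,1}^{n_1}×{0,1}^{n_2} → {0,1}^m be a (k_1,k_2,ε) two-source extractor that is strong in the i-th input. Then for every joint distribution of (X_1,X_2,Z) with Z a finite random variable, X_j taking values in {0,1}^{n_j}, such that X_1 and X_2 are conditionally independent given Z, H_min(X_1|Z) ≥ k_1 + log₂(1/ε) and H_min(X_2|Z) ≥ k_2 + log₂(1/ε), one has (1/2)∑_{y∈{0,1}^m, x_i, z} |Pr[Ext(X_1,X_2)=y, X_i=x_i, Z=z] − 2^{−m}·Pr[X_i=x_i, Z=z]| ≤ 3ε. -/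
open Kronecker Matrix
open scoped ComplexOrder

theorem strong_two_source_extractor_classical_markov
    (n : Fin 2 → ℕ) (m : ℕ)
    (Ext : (∀ j, Fin (n j) → Bool) → Fin m → Bool)
    (k : Fin 2 → ℝ) (ε : ℝ) (i : Fin 2) (hε0 : 0 < ε) (hε1 : ε ≤ 1)
    -- `Ext` is a `(k₁,k₂,ε)` two-source extractor strong in the `i`-th input:
    (hExt : ∀ p : ∀ j, (Fin (n j) → Bool) → ℝ,
      (∀ j x, 0 ≤ p j x) → (∀ j, (∑ x, p j x) = 1) →
      (∀ j, Finset.univ.sup' Finset.univ_nonempty (p j) ≤ (2:ℝ) ^ (-(k j))) →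
      (1/2) * ∑ y : Fin m → Bool, ∑ a : Fin (n i) → Bool,
        |(∑ x ∈ Finset.univ.filter
            (fun x : ∀ j, Fin (n j) → Bool => Ext x = y ∧ x i = a),
            ∏ j, p j (x j))
          - ((2:ℝ)^m)⁻¹ * p i a| ≤ ε) :
    ∀ (Z : Type) [Fintype Z],
    ∀ q : (∀ j, Fin (n j) → Bool) → Z → ℝ,
      (∀ x z, 0 ≤ q x z) → (∑ x, ∑ z, q x z) = 1 →
      -- `X₁` and `X₂` are conditionally independent given `Z`
      (∀ x z, q x z * (∑ x', q x' z)
        = (∑ x' ∈ Finset.univ.filter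
            (fun x' : ∀ j, Fin (n j) → Bool => x' 0 = x 0), q x' z)
          * (∑ x' ∈ Finset.univ.filter
            (fun x' : ∀ j, Fin (n j) → Bool => x' 1 = x 1), q x' z)) →
      -- `H_min(X_j | Z) ≥ k_j + log₂(1/ε)`
      (∀ j, ∑ z, Finset.univ.sup' Finset.univ_nonempty
          (fun a : Fin (n j) → Bool =>
            ∑ x ∈ Finset.univ.filter (fun x : ∀ j', Fin (n j') → Bool => x j = a), q x z)
        ≤ (2:ℝ) ^ (-(k j + Real.logb 2 (1/ε)))) →
      (1/2) * ∑ y : Fin m → Bool, ∑ a : Fin (n i) → Bool, ∑ z,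
        |(∑ x ∈ Finset.univ.filter
            (fun x : ∀ j, Fin (n j) → Bool => Ext x = y ∧ x i = a), q x z)
          - ((2:ℝ)^m)⁻¹ * ∑ x ∈ Finset.univ.filter
              (fun x : ∀ j, Fin (n j) → Bool => x i = a), q x z|
        ≤ 3 * ε := by
  intro Z _ q hq0 hq1 hCI hH
  classical
  -- abbreviations
  set qz : Z → ℝ := fun z => ∑ x, q x z with hqzdef
  have hqznn : ∀ z, 0 ≤ qz z := fun z => Finset.sum_nonneg fun x _ => hq0 x z
  set marg : ∀ j : Fin 2, (Fin (n j) → Bool) → Z → ℝ :=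
    fun j a z => ∑ x ∈ Finset.univ.filter
      (fun x : ∀ j', Fin (n j') → Bool => x j = a), q x z with hmargdef
  have hmargnn : ∀ j a z, 0 ≤ marg j a z :=
    fun j a z => Finset.sum_nonneg fun x _ => hq0 x z
  have hmargsum : ∀ j z, ∑ a, marg j a z = qz z := by
    intro j z
    exact Finset.sum_fiberwise_of_maps_to (fun x _ => Finset.mem_univ (x j)) _
  -- sup over a of marg
  set sup : ∀ j : Fin 2, Z → ℝ :=
    fun j z => Finset.univ.sup' Finset.univ_nonempty (fun a => marg j a z) with hsupdef
  have hsupnn : ∀ j z, 0 ≤ sup j z := by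
    intro j z
    exact le_trans (hmargnn j (fun _ => false) z)
      (Finset.le_sup' (fun a => marg j a z) (Finset.mem_univ _))
  have hmarg_le_sup : ∀ j a z, marg j a z ≤ sup j z :=
    fun j a z => Finset.le_sup' (fun a => marg j a z) (Finset.mem_univ a)
  -- total probability
  have hqzsum : ∑ z, qz z = 1 := by
    rw [hqzdef]; rw [Finset.sum_comm] at hq1; exact hq1
  -- per-z deviation
  set D : Z → ℝ := fun z => (1/2) * ∑ y : Fin m → Bool, ∑ a : Fin (n i) → Bool,
      |(∑ x ∈ Finset.univ.filter
          (fun x : ∀ j, Fin (n j) → Bool => Ext x = y ∧ x i = a), q x z)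
        - ((2:ℝ)^m)⁻¹ * marg i a z| with hDdef
  have hDnn : ∀ z, 0 ≤ D z := by
    intro z
    apply mul_nonneg (by norm_num)
    exact Finset.sum_nonneg fun y _ => Finset.sum_nonneg fun a _ => abs_nonneg _
  -- total mass of the joint fibers
  have hA : ∀ z, (∑ y : Fin m → Bool, ∑ a : Fin (n i) → Bool,
      ∑ x ∈ Finset.univ.filter
        (fun x : ∀ j, Fin (n j) → Bool => Ext x = y ∧ x i = a), q x z) = qz z := by
    intro z
    have h1 : ∀ y : Fin m → Bool, (∑ a : Fin (n i) → Bool,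
        ∑ x ∈ Finset.univ.filter
          (fun x : ∀ j, Fin (n j) → Bool => Ext x = y ∧ x i = a), q x z)
        = ∑ x ∈ Finset.univ.filter
            (fun x : ∀ j, Fin (n j) → Bool => Ext x = y), q x z := by
      intro y
      rw [← Finset.sum_fiberwise_of_maps_to
        (fun x _ => Finset.mem_univ (x i)) (fun x => q x z)]
      apply Finset.sum_congr rfl
      intro a _
      congr 1
      rw [Finset.filter_filter]
    rw [Finset.sum_congr rfl fun y _ => h1 y]
    exact Finset.sum_fiberwise_of_maps_to (fun x _ => Finset.mem_univ (Ext x)) _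
  -- crude bound : D z ≤ qz z
  have hDle : ∀ z, D z ≤ qz z := by
    intro z
    have hcard : (((Finset.univ : Finset (Fin m → Bool))).card : ℝ) = (2:ℝ)^m := by
      rw [Finset.card_univ]
      simp
    have hB : (∑ y : Fin m → Bool, ∑ a : Fin (n i) → Bool,
        ((2:ℝ)^m)⁻¹ * marg i a z) = qz z := by
      rw [Finset.sum_const, ← Finset.mul_sum, hmargsum i z, nsmul_eq_mul, ← mul_assoc,
        hcard, mul_inv_cancel₀ (by positivity), one_mul]
    have : D z ≤ (1/2) * ((∑ y : Fin m → Bool, ∑ a : Fin (n i) → Bool,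
        ∑ x ∈ Finset.univ.filter
          (fun x : ∀ j, Fin (n j) → Bool => Ext x = y ∧ x i = a), q x z)
      + ∑ y : Fin m → Bool, ∑ a : Fin (n i) → Bool, ((2:ℝ)^m)⁻¹ * marg i a z) := by
      rw [hDdef, ← Finset.sum_add_distrib]
      apply mul_le_mul_of_nonneg_left _ (by norm_num)
      apply Finset.sum_le_sum
      intro y _
      rw [← Finset.sum_add_distrib]
      apply Finset.sum_le_sum
      intro a _
      have h1 : 0 ≤ ∑ x ∈ Finset.univ.filter
          (fun x : ∀ j, Fin (n j) → Bool => Ext x = y ∧ x i = a), q x z :=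
        Finset.sum_nonneg fun x _ => hq0 x z
      have h2 : (0:ℝ) ≤ ((2:ℝ)^m)⁻¹ * marg i a z := by
        have := hmargnn i a z; positivity
      have habs : |(∑ x ∈ Finset.univ.filter
          (fun x : ∀ j, Fin (n j) → Bool => Ext x = y ∧ x i = a), q x z)
          - ((2:ℝ)^m)⁻¹ * marg i a z|
          ≤ |(∑ x ∈ Finset.univ.filter
          (fun x : ∀ j, Fin (n j) → Bool => Ext x = y ∧ x i = a), q x z)|
          + |((2:ℝ)^m)⁻¹ * marg i a z| := abs_sub _ _
      rw [abs_of_nonneg h1, abs_of_nonneg h2] at habs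
      exact habs
    rw [hA z, hB] at this
    linarith [this, hqznn z]
  -- good z bound : D z ≤ ε * qz z
  have hGood : ∀ z, qz z ≠ 0 →
      sup 0 z ≤ (2:ℝ)^(-(k 0)) * qz z → sup 1 z ≤ (2:ℝ)^(-(k 1)) * qz z →
      D z ≤ ε * qz z := by
    intro z hz h0 h1
    have hzpos : 0 < qz z := lt_of_le_of_ne (hqznn z) (Ne.symm hz)
    set p : ∀ j : Fin 2, (Fin (n j) → Bool) → ℝ := fun j a => marg j a z / qz z with hpdef
    have hp0 : ∀ j a, 0 ≤ p j a := fun j a => div_nonneg (hmargnn j a z) (hqznn z)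
    have hp1 : ∀ j : Fin 2, (∑ a, p j a) = 1 := by
      intro j
      rw [hpdef]
      simp only
      rw [← Finset.sum_div, hmargsum j z, div_self hz]
    have hpsup : ∀ j : Fin 2, Finset.univ.sup' Finset.univ_nonempty (p j) ≤ (2:ℝ)^(-(k j)) := by
      intro j
      apply Finset.sup'_le
      intro a _
      rw [hpdef]
      simp only
      rw [div_le_iff₀ hzpos]
      have hj : sup j z ≤ (2:ℝ)^(-(k j)) * qz z := by
        fin_cases j <;> assumption
      exact le_trans (hmarg_le_sup j a z) hj
    have key := hExt p hp0 hp1 hpsup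
    -- rewrite the product as conditional probability
    have hprod : ∀ x : ∀ j, Fin (n j) → Bool, (∏ j, p j (x j)) = q x z / qz z := by
      intro x
      rw [Fin.prod_univ_two, hpdef]
      simp only
      rw [div_mul_div_comm]
      rw [← hCI x z]
      rw [div_eq_div_iff (ne_of_gt (mul_pos hzpos hzpos)) hz]
      ring
    have keyeq : (1/2) * ∑ y : Fin m → Bool, ∑ a : Fin (n i) → Bool,
        |(∑ x ∈ Finset.univ.filter
            (fun x : ∀ j, Fin (n j) → Bool => Ext x = y ∧ x i = a),
            ∏ j, p j (x j))
          - ((2:ℝ)^m)⁻¹ * p i a| = D z / qz z := by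
      rw [hDdef]
      rw [mul_div_assoc, Finset.sum_div]
      congr 1
      apply Finset.sum_congr rfl
      intro y _
      rw [Finset.sum_div]
      apply Finset.sum_congr rfl
      intro a _
      rw [Finset.sum_congr rfl fun x _ => hprod x]
      rw [← Finset.sum_div, hpdef]
      simp only
      rw [← mul_div_assoc, div_sub_div_same, abs_div, abs_of_pos hzpos]
    rw [keyeq, div_le_iff₀ hzpos] at key
    linarith [key]
  -- Markov : bad z have small mass
  have hMarkov : ∀ j : Fin 2,
      ∑ z ∈ Finset.univ.filter (fun z => ¬ (sup j z ≤ (2:ℝ)^(-(k j)) * qz z)), qz z ≤ ε := by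
    intro j
    have hpow : (0:ℝ) < (2:ℝ)^(-(k j)) := Real.rpow_pos_of_pos (by norm_num) _
    have hrhs : (2:ℝ) ^ (-(k j + Real.logb 2 (1/ε))) = (2:ℝ)^(-(k j)) * ε := by
      rw [neg_add, Real.rpow_add (by norm_num : (0:ℝ) < 2)]
      congr 1
      rw [one_div, Real.logb_inv, neg_neg]
      exact Real.rpow_logb (by norm_num) (by norm_num) hε0
    have step : (2:ℝ)^(-(k j)) * ∑ z ∈ Finset.univ.filter
        (fun z => ¬ (sup j z ≤ (2:ℝ)^(-(k j)) * qz z)), qz z ≤ (2:ℝ)^(-(k j)) * ε := by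
      rw [Finset.mul_sum]
      calc ∑ z ∈ Finset.univ.filter (fun z => ¬ (sup j z ≤ (2:ℝ)^(-(k j)) * qz z)),
            (2:ℝ)^(-(k j)) * qz z
          ≤ ∑ z ∈ Finset.univ.filter
            (fun z => ¬ (sup j z ≤ (2:ℝ)^(-(k j)) * qz z)), sup j z := by
            apply Finset.sum_le_sum
            intro z hz
            rw [Finset.mem_filter] at hz
            exact le_of_lt (lt_of_not_ge hz.2)
        _ ≤ ∑ z, sup j z := by
            apply Finset.sum_le_sum_of_subset_of_nonneg (Finset.filter_subset _ _)
            intro z _ _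
            exact hsupnn j z
        _ ≤ (2:ℝ)^(-(k j)) * ε := by rw [← hrhs]; exact hH j
    exact le_of_mul_le_mul_left step hpow
  -- put everything together
  have hswap : (1/2) * ∑ y : Fin m → Bool, ∑ a : Fin (n i) → Bool, ∑ z,
      |(∑ x ∈ Finset.univ.filter
          (fun x : ∀ j, Fin (n j) → Bool => Ext x = y ∧ x i = a), q x z)
        - ((2:ℝ)^m)⁻¹ * ∑ x ∈ Finset.univ.filter
            (fun x : ∀ j, Fin (n j) → Bool => x i = a), q x z|
      = ∑ z, D z := by
    have h1 : ∀ y : Fin m → Bool, (∑ a : Fin (n i) → Bool, ∑ z,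
        |(∑ x ∈ Finset.univ.filter
            (fun x : ∀ j, Fin (n j) → Bool => Ext x = y ∧ x i = a), q x z)
          - ((2:ℝ)^m)⁻¹ * marg i a z|)
        = ∑ z, ∑ a : Fin (n i) → Bool,
        |(∑ x ∈ Finset.univ.filter
            (fun x : ∀ j, Fin (n j) → Bool => Ext x = y ∧ x i = a), q x z)
          - ((2:ℝ)^m)⁻¹ * marg i a z| := fun y => Finset.sum_comm
    rw [Finset.sum_congr rfl fun y _ => h1 y]
    rw [Finset.sum_comm, Finset.mul_sum]
  rw [hswap]
  set P : Z → Prop := fun z =>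
    sup 0 z ≤ (2:ℝ)^(-(k 0)) * qz z ∧ sup 1 z ≤ (2:ℝ)^(-(k 1)) * qz z with hPdef
  rw [← Finset.sum_filter_add_sum_filter_not Finset.univ P D]
  have hgood : ∑ z ∈ Finset.univ.filter P, D z ≤ ε := by
    calc ∑ z ∈ Finset.univ.filter P, D z
        ≤ ∑ z ∈ Finset.univ.filter P, ε * qz z := by
          apply Finset.sum_le_sum
          intro z hz
          rw [Finset.mem_filter, hPdef] at hz
          by_cases hzz : qz z = 0
          · rw [hzz, mul_zero]
            exact le_trans (hDle z) (le_of_eq hzz)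
          · exact hGood z hzz hz.2.1 hz.2.2
      _ = ε * ∑ z ∈ Finset.univ.filter P, qz z := by rw [Finset.mul_sum]
      _ ≤ ε * 1 := by
          apply mul_le_mul_of_nonneg_left _ (le_of_lt hε0)
          rw [← hqzsum]
          apply Finset.sum_le_sum_of_subset_of_nonneg (Finset.filter_subset _ _)
          intro z _ _
          exact hqznn z
      _ = ε := mul_one ε
  have hbad : ∑ z ∈ Finset.univ.filter (fun z => ¬ P z), D z ≤ 2 * ε := by
    have hsub : Finset.univ.filter (fun z => ¬ P z) ⊆
        Finset.univ.filter (fun z => ¬ (sup 0 z ≤ (2:ℝ)^(-(k 0)) * qz z)) ∪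
        Finset.univ.filter (fun z => ¬ (sup 1 z ≤ (2:ℝ)^(-(k 1)) * qz z)) := by
      intro z hz
      rw [Finset.mem_filter, hPdef] at hz
      rw [Finset.mem_union, Finset.mem_filter, Finset.mem_filter]
      rcases not_and_or.mp hz.2 with h | h
      · exact Or.inl ⟨hz.1, h⟩
      · exact Or.inr ⟨hz.1, h⟩
    calc ∑ z ∈ Finset.univ.filter (fun z => ¬ P z), D z
        ≤ ∑ z ∈ Finset.univ.filter (fun z => ¬ P z), qz z :=
          Finset.sum_le_sum fun z _ => hDle z
      _ ≤ ∑ z ∈ (Finset.univ.filter (fun z => ¬ (sup 0 z ≤ (2:ℝ)^(-(k 0)) * qz z)) ∪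
            Finset.univ.filter (fun z => ¬ (sup 1 z ≤ (2:ℝ)^(-(k 1)) * qz z))), qz z := by
          apply Finset.sum_le_sum_of_subset_of_nonneg hsub
          intro z _ _
          exact hqznn z
      _ ≤ (∑ z ∈ Finset.univ.filter (fun z => ¬ (sup 0 z ≤ (2:ℝ)^(-(k 0)) * qz z)), qz z)
          + ∑ z ∈ Finset.univ.filter (fun z => ¬ (sup 1 z ≤ (2:ℝ)^(-(k 1)) * qz z)), qz z := by
          rw [← Finset.sum_union_inter]
          have : 0 ≤ ∑ z ∈ (Finset.univ.filter (fun z => ¬ (sup 0 z ≤ (2:ℝ)^(-(k 0)) * qz z)) ∩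
              Finset.univ.filter (fun z => ¬ (sup 1 z ≤ (2:ℝ)^(-(k 1)) * qz z))), qz z :=
            Finset.sum_nonneg fun z _ => hqznn z
          linarith
      _ ≤ ε + ε := add_le_add (hMarkov 0) (hMarkov 1)
      _ = 2 * ε := by ring
  linarith [hgood, hbad]
end

section
/- Let ρ(x_1,x_2) = ρ_1(x_1) ⊗ ρ_2(x_2) be a ccq-state of product form on C = C_1⊗C_2, where ρ_1 is a cq-state on {0,1}^{n_1} with side information C_1 and ρ_2 a cq-state on {0,1}^{n_2} with side information C_2. Let Ext: {0,1}^{n_1}×{0,1}^{n_2} → {0,1}^m and M := 2^m. Then there exists a POVM {G_{z_2}}_{z_2∈{0,1}^{n_2}} on C_2 such that (1/M)·(∑_{y,x_1} ‖∑_{x_2: Ext(x_1,x_2)=y} ρ_1(x_1)⊗ρ_2(x_2) − (1/M)∑_{x_2} ρ_1(x_1)⊗ρ_2(x_2)‖₁)² ≤ ∑_{x_1,x_2,z_2,y} (δ_{Ext(x_1,x_2)=y} − 1/M)(δ_{Ext(x_1,z_2)=y} − 1/M) · Tr(ρ_1(x_1)) · Tr(ρ_2(x_2) G_{z_2}). 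-/
open Kronecker Matrix
open scoped ComplexOrder

/-- Trace norm of a complex matrix: `Tr √(Rᴴ R)`. -/
noncomputable def traceNorm {n : Type*} [Fintype n] [DecidableEq n] (R : Matrix n n ℂ) : ℝ :=
  ((Matrix.isHermitian_conjTranspose_mul_self R).eigenvectorUnitary.1 *
    Matrix.diagonal (((↑) : ℝ → ℂ) ∘ (√·) ∘ (Matrix.isHermitian_conjTranspose_mul_self R).eigenvalues) *
    (star (Matrix.isHermitian_conjTranspose_mul_self R).eigenvectorUnitary :
      Matrix n n ℂ)).trace.re

/-!
Take for `G` the pretty good measurement of the ensemble `ρ₂`: with `σ = ∑ ρ₂`,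
`G z = σ^{-1/2} ρ₂(z) σ^{-1/2}`, completed on `ker σ`. For `B = ∑_{x₂} (δ - 1/M) ρ₂(x₂)` the trace
norm of `ρ₁(x₁) ⊗ B` is `Tr ρ₁(x₁) · ‖B‖₁`, and the right-hand side equals
`∑ Tr ρ₁(x₁) · Tr(B σ^{-1/2} B σ^{-1/2})`. Cauchy–Schwarz over the pairs `(y, x₁)`, weighted by
`Tr ρ₁(x₁)`, reduces the claim to `‖B‖₁² ≤ Tr σ · Tr(B σ^{-1/2} B σ^{-1/2})` for Hermitian `B`
vanishing on `ker σ`. Writing `‖B‖₁ = Tr(B W)` with a Hermitian unitary `W` and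
`B = σ^{1/4} X σ^{1/4}`, `X = σ^{-1/4} B σ^{-1/4}`, this is Cauchy–Schwarz for the
Hilbert–Schmidt inner product: `Tr(B W) = ⟪X, σ^{1/4} W σ^{1/4}⟫`, and
`‖σ^{1/4} W σ^{1/4}‖₂² = Tr(σ^{1/2} W σ^{1/2} W) ≤ Tr σ` by Cauchy–Schwarz once more.
-/

open scoped MatrixOrder

namespace Matrix

variable {n : Type*} [Fintype n]

lemma re_trace_mul_conjTranspose_self_nonneg (X : Matrix n n ℂ) : 0 ≤ (X * Xᴴ).trace.re :=
  (Complex.nonneg_iff.mp (posSemidef_self_mul_conjTranspose X).trace_nonneg).1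

variable [DecidableEq n]

lemma cfc_mul_cfc (f g : ℝ → ℝ) (A : Matrix n n ℂ) :
    cfc f A * cfc g A = cfc (fun x => f x * g x) A :=
  (cfc_mul f g A (A.finite_real_spectrum.continuousOn f)
    (A.finite_real_spectrum.continuousOn g)).symm

lemma cfc_add_cfc (f g : ℝ → ℝ) (A : Matrix n n ℂ) :
    cfc f A + cfc g A = cfc (fun x => f x + g x) A :=
  (cfc_add (a := A) f g (A.finite_real_spectrum.continuousOn f)
    (A.finite_real_spectrum.continuousOn g)).symm

lemma norm_trace_mul_conjTranspose_sq_le (X Y : Matrix n n ℂ) :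
    ‖(X * Yᴴ).trace‖ ^ 2 ≤ (X * Xᴴ).trace.re * (Y * Yᴴ).trace.re := by
  let _ := (1 : Matrix n n ℂ).toMatrixSeminormedAddCommGroup PosSemidef.one
  let _ := (1 : Matrix n n ℂ).toMatrixInnerProductSpace PosSemidef.one
  have hinner (A B : Matrix n n ℂ) : inner ℂ A B = (B * Aᴴ).trace := by
    change (B * 1 * Aᴴ).trace = _
    rw [Matrix.mul_one]
  have h := pow_le_pow_left₀ (norm_nonneg _) (norm_inner_le_norm (𝕜 := ℂ) Y X) 2
  rwa [mul_pow, norm_sq_eq_re_inner (𝕜 := ℂ) Y, norm_sq_eq_re_inner (𝕜 := ℂ) X, mul_comm,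
    hinner, hinner, hinner] at h

end Matrix

section traceNorm

variable {n : Type*} [Fintype n] [DecidableEq n]

lemma traceNorm_eq_re_trace_abs (R : Matrix n n ℂ) : traceNorm R = (CFC.abs R).trace.re := by
  rw [CFC.abs, CFC.sqrt_eq_real_sqrt _ (star_mul_self_nonneg R), cfcₙ_eq_cfc, star_eq_conjTranspose,
    (isHermitian_conjTranspose_mul_self R).cfc_eq, IsHermitian.cfc, Unitary.conjStarAlgAut_apply]
  rfl

lemma traceNorm_kronecker_of_posSemidef {m : Type*} [Fintype m] [DecidableEq m]
    {ρ : Matrix m m ℂ} (hρ : ρ.PosSemidef) (B : Matrix n n ℂ) :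
    traceNorm (ρ ⊗ₖ B) = ρ.trace.re * traceNorm B := by
  have habs : CFC.abs (ρ ⊗ₖ B) = ρ ⊗ₖ CFC.abs B := by
    rw [CFC.abs, CFC.sqrt_eq_iff _ _ (star_mul_self_nonneg _)
      (hρ.kronecker (CFC.abs_nonneg B).posSemidef).nonneg, ← mul_kronecker_mul, CFC.abs_mul_abs]
    simp only [star_eq_conjTranspose]
    rw [conjTranspose_kronecker, hρ.isHermitian.eq, ← mul_kronecker_mul]
  have him : ρ.trace.im = 0 := (Complex.nonneg_iff.mp hρ.trace_nonneg).2.symm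
  rw [traceNorm_eq_re_trace_abs, traceNorm_eq_re_trace_abs, habs, trace_kronecker, Complex.mul_re,
    him, zero_mul, sub_zero]

lemma Matrix.IsHermitian.exists_traceNorm_eq_re_trace_mul {B : Matrix n n ℂ} (hB : B.IsHermitian) :
    ∃ W : Matrix n n ℂ, W.IsHermitian ∧ W * W = 1 ∧ traceNorm B = (B * W).trace.re := by
  let sign : ℝ → ℝ := fun x => if x < 0 then -1 else 1
  refine ⟨cfc sign B, cfc_predicate sign B, ?_, ?_⟩
  · rw [cfc_mul_cfc, ← cfc_one ℝ B hB.isSelfAdjoint]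
    exact cfc_congr fun x _ => by simp only [sign]; split_ifs <;> norm_num
  · have habs : cfc (‖·‖) B = cfc (fun x => x * sign x) B := cfc_congr fun x _ => by
      simp only [sign, Real.norm_eq_abs]
      split_ifs with h
      · rw [abs_of_neg h]; ring
      · rw [abs_of_nonneg (not_lt.mp h)]; ring
    rw [traceNorm_eq_re_trace_abs, CFC.abs_eq_cfc_norm B hB.isSelfAdjoint, habs]
    nth_rewrite 2 [← cfc_id' ℝ B hB.isSelfAdjoint]
    rw [cfc_mul_cfc]

end traceNorm

namespace Matrix

variable {n : Type*} [Fintype n] [DecidableEq n]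

/-- `A^{-1/2}` on the support of `A` and `0` on its kernel, since `(√0)⁻¹ = 0`. -/
noncomputable def pinvSqrt (A : Matrix n n ℂ) : Matrix n n ℂ := cfc (fun x : ℝ => (√x)⁻¹) A

noncomputable def kerProj (A : Matrix n n ℂ) : Matrix n n ℂ :=
  cfc (fun x : ℝ => if x = 0 then (1 : ℝ) else 0) A

lemma isHermitian_cfc (f : ℝ → ℝ) (A : Matrix n n ℂ) : (cfc f A).IsHermitian :=
  cfc_predicate f A

lemma isHermitian_pinvSqrt (A : Matrix n n ℂ) : (pinvSqrt A).IsHermitian := isHermitian_cfc _ A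

lemma isHermitian_kerProj (A : Matrix n n ℂ) : (kerProj A).IsHermitian := isHermitian_cfc _ A

lemma kerProj_nonneg (A : Matrix n n ℂ) : 0 ≤ kerProj A :=
  cfc_nonneg fun x _ => by split_ifs <;> norm_num

lemma mul_kerProj {A : Matrix n n ℂ} (hA : A.IsHermitian) : A * kerProj A = 0 := by
  nth_rewrite 1 [← cfc_id' ℝ A hA.isSelfAdjoint]
  rw [kerProj, cfc_mul_cfc, ← cfc_zero ℝ A]
  exact cfc_congr fun x _ => by split_ifs with h <;> simp [h]

lemma mul_kerProj_eq_zero_of_le {ρ σ : Matrix n n ℂ} (hρ : 0 ≤ ρ) (hρσ : ρ ≤ σ) :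
    ρ * kerProj σ = 0 := by
  have hQ : star (kerProj σ) = kerProj σ := (isHermitian_kerProj σ).eq
  have hQρQ : star (kerProj σ) * ρ * kerProj σ = 0 := by
    refine le_antisymm ?_ (star_left_conjugate_nonneg hρ _)
    calc star (kerProj σ) * ρ * kerProj σ ≤ star (kerProj σ) * σ * kerProj σ :=
          star_left_conjugate_le_conjugate hρσ _
      _ = 0 := by rw [mul_assoc, mul_kerProj (hρ.trans hρσ).posSemidef.isHermitian, mul_zero]
  obtain ⟨C, rfl⟩ := CStarAlgebra.nonneg_iff_eq_star_mul_self.mp hρ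
  have hCQ : C * kerProj σ = 0 := by
    rw [← conjTranspose_mul_self_eq_zero, ← star_eq_conjTranspose, star_mul, hQ, ← hQρQ, hQ]
    simp only [mul_assoc]
  rw [mul_assoc, hCQ, mul_zero]

lemma re_trace_mul_mul_mul_mul_le {r W : Matrix n n ℂ} (hr : r.IsHermitian) (hW : W.IsHermitian)
    (hWW : W * W = 1) : (r * W * r * W).trace.re ≤ (r * r).trace.re := by
  have hcs := norm_trace_mul_conjTranspose_sq_le (r * W) (W * r)
  have hrWr : (r * W * (r * W)ᴴ).trace = (r * r).trace := by
    rw [conjTranspose_mul, hr.eq, hW.eq, mul_assoc, ← mul_assoc W, hWW, one_mul]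
  have hWrW : (W * r * (W * r)ᴴ).trace = (r * r).trace := by
    rw [conjTranspose_mul, hr.eq, hW.eq, trace_mul_comm, mul_assoc, ← mul_assoc W, hWW, one_mul]
  have hrr : 0 ≤ (r * r).trace.re := by
    simpa [hr.eq] using re_trace_mul_conjTranspose_self_nonneg r
  rw [hrWr, hWrW, ← sq, pow_le_pow_iff_left₀ (norm_nonneg _) hrr two_ne_zero, conjTranspose_mul,
    hr.eq, hW.eq, ← mul_assoc] at hcs
  exact (Complex.re_le_norm _).trans hcs

lemma traceNorm_sq_le_of_eq_mul_mul {s X B : Matrix n n ℂ} (hs : s.IsHermitian)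
    (hB : B.IsHermitian) (hBsXs : B = s * X * s) :
    traceNorm B ^ 2 ≤ (s * s * (s * s)).trace.re * (X * Xᴴ).trace.re := by
  obtain ⟨W, hW, hWW, hBW⟩ := hB.exists_traceNorm_eq_re_trace_mul
  set Y := s * W * s
  have hY : Yᴴ = Y := by simp only [Y, conjTranspose_mul, hs.eq, hW.eq, mul_assoc]
  have hBW_XY : (B * W).trace = (X * Yᴴ).trace := by
    calc (B * W).trace = (s * (X * s * W)).trace := by rw [hBsXs]; simp only [mul_assoc]
      _ = (X * Yᴴ).trace := by rw [trace_mul_comm, hY]; simp only [Y, mul_assoc]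
  have hYY : (Y * Yᴴ).trace.re ≤ (s * s * (s * s)).trace.re := by
    have hss : (s * s).IsHermitian := by rw [IsHermitian, conjTranspose_mul, hs.eq]
    calc (Y * Yᴴ).trace.re = (s * s * W * (s * s) * W).trace.re := by
          rw [hY]; simp only [Y, ← mul_assoc]; rw [trace_mul_comm _ s]; simp only [mul_assoc]
      _ ≤ (s * s * (s * s)).trace.re := re_trace_mul_mul_mul_mul_le hss hW hWW
  calc traceNorm B ^ 2 = (X * Yᴴ).trace.re ^ 2 := by rw [hBW, hBW_XY]
    _ ≤ ‖(X * Yᴴ).trace‖ ^ 2 := by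
      rw [← sq_abs]
      exact pow_le_pow_left₀ (abs_nonneg _) (Complex.abs_re_le_norm _) 2
    _ ≤ (X * Xᴴ).trace.re * (Y * Yᴴ).trace.re := norm_trace_mul_conjTranspose_sq_le X Y
    _ ≤ (s * s * (s * s)).trace.re * (X * Xᴴ).trace.re := by
      rw [mul_comm]
      exact mul_le_mul_of_nonneg_right hYY (re_trace_mul_conjTranspose_self_nonneg X)

lemma traceNorm_sq_le_re_trace_mul_pinvSqrt {σ B : Matrix n n ℂ} (hσ : 0 ≤ σ)
    (hB : B.IsHermitian) (hBσ : B * kerProj σ = 0) :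
    traceNorm B ^ 2 ≤ σ.trace.re * (B * pinvSqrt σ * B * pinvSqrt σ).trace.re := by
  have hspec : ∀ x ∈ spectrum ℝ σ, 0 ≤ x := fun x hx => spectrum_nonneg_of_nonneg hσ hx
  set s := cfc (fun x : ℝ => √√x) σ
  set t := cfc (fun x : ℝ => (√√x)⁻¹) σ
  have hst : s * t = 1 - kerProj σ := by
    rw [eq_sub_iff_add_eq, cfc_mul_cfc, kerProj, cfc_add_cfc, ← cfc_one ℝ σ]
    refine cfc_congr fun x hx => ?_
    rcases (hspec x hx).eq_or_lt with h | h
    · simp [← h]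
    · have : √√x ≠ 0 := by positivity
      simp [this, h.ne']
  have hts : t * s = s * t := by simp only [t, s, cfc_mul_cfc, mul_comm]
  have htt : t * t = pinvSqrt σ := by
    rw [cfc_mul_cfc, pinvSqrt]
    exact cfc_congr fun x _ => by rw [← mul_inv, Real.mul_self_sqrt (Real.sqrt_nonneg x)]
  have hs4 : s * s * (s * s) = σ := by
    conv_rhs => rw [← cfc_id' ℝ σ]
    rw [cfc_mul_cfc, cfc_mul_cfc]
    refine cfc_congr fun x hx => ?_
    simp only [Real.mul_self_sqrt (Real.sqrt_nonneg x), Real.mul_self_sqrt (hspec x hx)]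
  have hσB : kerProj σ * B = 0 := by
    simpa [(isHermitian_kerProj σ).eq, hB.eq] using congrArg conjTranspose hBσ
  have hB_eq : B = s * (t * B * t) * s := by
    have hB1 : B * (s * t) = B := by rw [hst, mul_sub, mul_one, hBσ, sub_zero]
    have hB2 : s * t * B = B := by rw [hst, sub_mul, one_mul, hσB, sub_zero]
    calc B = s * t * B * (t * s) := by rw [hts, mul_assoc, hB1, hB2]
      _ = s * (t * B * t) * s := by simp only [mul_assoc]
  have hXX : (t * B * t * (t * B * t)ᴴ).trace = (B * pinvSqrt σ * B * pinvSqrt σ).trace := by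
    have ht : t.IsHermitian := isHermitian_cfc _ σ
    rw [conjTranspose_mul, conjTranspose_mul, ht.eq, hB.eq, ← htt]
    simp only [mul_assoc]
    rw [trace_mul_comm t]
    simp only [mul_assoc]
  have hs : s.IsHermitian := isHermitian_cfc _ σ
  simpa only [hs4, hXX] using traceNorm_sq_le_of_eq_mul_mul hs hB hB_eq

lemma pinvSqrt_mul_mul_pinvSqrt_add_kerProj {σ : Matrix n n ℂ} (hσ : 0 ≤ σ) :
    pinvSqrt σ * σ * pinvSqrt σ + kerProj σ = 1 := by
  rw [pinvSqrt, kerProj]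
  nth_rewrite 2 [← cfc_id' ℝ σ]
  rw [cfc_mul_cfc, cfc_mul_cfc, cfc_add_cfc, ← cfc_one ℝ σ]
  refine cfc_congr fun x hx => ?_
  rcases (spectrum_nonneg_of_nonneg hσ hx).eq_or_lt with h | h
  · simp [← h]
  · have : √x ≠ 0 := by positivity
    simp only [h.ne', if_false, add_zero, Pi.one_apply]
    field_simp
    rw [Real.sq_sqrt h.le]

variable {ι : Type*} [Fintype ι]

/-- The pretty good measurement of the ensemble `ρ`, completed to a POVM by spreading the
projection onto the kernel of `∑ j, ρ j` evenly over the outcomes. -/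
noncomputable def prettyGoodMeasurement (ρ : ι → Matrix n n ℂ) (i : ι) : Matrix n n ℂ :=
  pinvSqrt (∑ j, ρ j) * ρ i * pinvSqrt (∑ j, ρ j) +
    (Fintype.card ι : ℝ)⁻¹ • kerProj (∑ j, ρ j)

variable {ρ : ι → Matrix n n ℂ}

lemma posSemidef_prettyGoodMeasurement (hρ : ∀ i, (ρ i).PosSemidef) (i : ι) :
    (prettyGoodMeasurement ρ i).PosSemidef := by
  have h := (hρ i).mul_mul_conjTranspose_same (pinvSqrt (∑ j, ρ j))
  rw [(isHermitian_pinvSqrt _).eq] at h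
  exact h.add ((kerProj_nonneg _).posSemidef.smul (by positivity))

lemma sum_prettyGoodMeasurement [Nonempty ι] (hρ : ∀ i, (ρ i).PosSemidef) :
    ∑ i, prettyGoodMeasurement ρ i = 1 := by
  have hcard : (Fintype.card ι : ℝ) ≠ 0 := Nat.cast_ne_zero.mpr Fintype.card_ne_zero
  simp only [prettyGoodMeasurement, Finset.sum_add_distrib, ← Finset.sum_mul, ← Finset.mul_sum,
    Finset.sum_const, Finset.card_univ, ← Nat.cast_smul_eq_nsmul ℝ, smul_smul,
    mul_inv_cancel₀ hcard, one_smul]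
  exact pinvSqrt_mul_mul_pinvSqrt_add_kerProj (Finset.sum_nonneg fun i _ => (hρ i).nonneg)

lemma sum_smul_mul_kerProj_sum (hρ : ∀ i, (ρ i).PosSemidef) (c : ι → ℝ) :
    (∑ i, c i • ρ i) * kerProj (∑ j, ρ j) = 0 := by
  refine Finset.sum_mul .. |>.trans (Finset.sum_eq_zero fun i _ => ?_)
  rw [smul_mul_assoc, mul_kerProj_eq_zero_of_le (hρ i).nonneg
    (Finset.single_le_sum (fun j _ => (hρ j).nonneg) (Finset.mem_univ i)), smul_zero]

lemma sum_sum_mul_re_trace_mul_prettyGoodMeasurement (hρ : ∀ i, (ρ i).PosSemidef) (c : ι → ℝ) :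
    ∑ i, ∑ j, c i * c j * (ρ i * prettyGoodMeasurement ρ j).trace.re =
      ((∑ i, c i • ρ i) * pinvSqrt (∑ j, ρ j) * (∑ i, c i • ρ i) *
        pinvSqrt (∑ j, ρ j)).trace.re := by
  set σ := ∑ j, ρ j
  set B := ∑ i, c i • ρ i
  have hG : ∑ j, c j • prettyGoodMeasurement ρ j =
      pinvSqrt σ * B * pinvSqrt σ + ((∑ j, c j) * (Fintype.card ι : ℝ)⁻¹) • kerProj σ := by
    simp only [prettyGoodMeasurement, smul_add, Finset.sum_add_distrib, B, Finset.mul_sum,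
      Finset.sum_mul, mul_smul_comm, smul_mul_assoc, smul_smul, Finset.sum_smul]
    rfl
  calc ∑ i, ∑ j, c i * c j * (ρ i * prettyGoodMeasurement ρ j).trace.re
      = (B * ∑ j, c j • prettyGoodMeasurement ρ j).trace.re := by
        simp only [B, Finset.sum_mul_sum, smul_mul_smul, trace_sum, trace_smul, Complex.re_sum,
          Complex.smul_re, smul_eq_mul]
    _ = (B * pinvSqrt σ * B * pinvSqrt σ).trace.re := by
        rw [hG, mul_add, mul_smul_comm, sum_smul_mul_kerProj_sum hρ c, smul_zero, add_zero]
        simp only [mul_assoc]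

lemma traceNorm_sq_le_sum_sum_mul_re_trace_mul_prettyGoodMeasurement
    (hρ : ∀ i, (ρ i).PosSemidef) (c : ι → ℝ) :
    traceNorm (∑ i, c i • ρ i) ^ 2 ≤ (∑ i, ρ i).trace.re *
      ∑ i, ∑ j, c i * c j * (ρ i * prettyGoodMeasurement ρ j).trace.re := by
  rw [sum_sum_mul_re_trace_mul_prettyGoodMeasurement hρ c]
  refine traceNorm_sq_le_re_trace_mul_pinvSqrt (Finset.sum_nonneg fun i _ => (hρ i).nonneg) ?_
    (sum_smul_mul_kerProj_sum hρ c)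
  exact (isSelfAdjoint_sum _ fun i _ =>
    (IsSelfAdjoint.all (c i)).smul (hρ i).isHermitian.isSelfAdjoint).isHermitian

end Matrix

lemma Finset.sum_filter_sub_smul_sum {ι M : Type*} [AddCommGroup M] [Module ℝ M] (s : Finset ι)
    (P : ι → Prop) [DecidablePred P] (f : ι → M) (a : ℝ) :
    ∑ i ∈ s with P i, f i - a • ∑ i ∈ s, f i = ∑ i ∈ s, ((if P i then 1 else 0) - a) • f i := by
  simp only [Finset.sum_filter, Finset.smul_sum, ← Finset.sum_sub_distrib, sub_smul, ite_smul,
    one_smul, zero_smul]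

lemma Matrix.kronecker_sum_smul {l m ι : Type*} [Fintype ι] (A : Matrix l l ℂ)
    (c : ι → ℝ) (B : ι → Matrix m m ℂ) :
    A ⊗ₖ ∑ i, c i • B i = ∑ i, c i • (A ⊗ₖ B i) := by
  ext ⟨a, b⟩ ⟨a', b'⟩
  simp [Matrix.sum_apply, Finset.mul_sum, mul_left_comm]

lemma inv_card_mul_sq_sum_sum_le {ι κ : Type*} [Fintype ι] [Fintype κ] {p : ι → ℝ}
    (hp : ∀ i, 0 ≤ p i) (a : κ → ι → ℝ) :
    (Fintype.card κ : ℝ)⁻¹ * (∑ k, ∑ i, p i * a k i) ^ 2 ≤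
      (∑ i, p i) * ∑ k, ∑ i, p i * a k i ^ 2 := by
  have hcs : (∑ k, ∑ i, p i * a k i) ^ 2 ≤
      (Fintype.card κ * ∑ i, p i) * ∑ k, ∑ i, p i * a k i ^ 2 := by
    have h := Finset.sum_sq_le_sum_mul_sum_of_sq_le_mul (Finset.univ ×ˢ Finset.univ)
      (r := fun x : κ × ι => p x.2 * a x.1 x.2) (f := fun x => p x.2)
      (g := fun x => p x.2 * a x.1 x.2 ^ 2) (fun x _ => hp x.2)
      (fun x _ => mul_nonneg (hp x.2) (sq_nonneg _)) (fun x _ => le_of_eq (by ring))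
    simpa [Fintype.sum_prod_type, Finset.sum_const, nsmul_eq_mul] using h
  have hc : (Fintype.card κ : ℝ)⁻¹ * Fintype.card κ ≤ 1 := by
    rcases eq_or_ne (Fintype.card κ : ℝ) 0 with h | h
    · simp [h]
    · rw [inv_mul_cancel₀ h]
  have hPT : 0 ≤ (∑ i, p i) * ∑ k, ∑ i, p i * a k i ^ 2 :=
    mul_nonneg (Finset.sum_nonneg fun i _ => hp i)
      (Finset.sum_nonneg fun k _ => Finset.sum_nonneg fun i _ => mul_nonneg (hp i) (sq_nonneg _))
  calc (Fintype.card κ : ℝ)⁻¹ * (∑ k, ∑ i, p i * a k i) ^ 2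
      ≤ (Fintype.card κ : ℝ)⁻¹ * ((Fintype.card κ * ∑ i, p i) * ∑ k, ∑ i, p i * a k i ^ 2) :=
        mul_le_mul_of_nonneg_left hcs (by positivity)
    _ = ((Fintype.card κ : ℝ)⁻¹ * Fintype.card κ) * ((∑ i, p i) * ∑ k, ∑ i, p i * a k i ^ 2) := by
        ring
    _ ≤ (∑ i, p i) * ∑ k, ∑ i, p i * a k i ^ 2 := mul_le_of_le_one_left hPT hc

theorem cauchy_schwarz_bound_strong_case
    (n1 n2 m d1 d2 : ℕ)
    (Ext : (Fin n1 → Bool) → (Fin n2 → Bool) → Fin m → Bool)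
    (ρ1 : (Fin n1 → Bool) → Matrix (Fin d1) (Fin d1) ℂ)
    (ρ2 : (Fin n2 → Bool) → Matrix (Fin d2) (Fin d2) ℂ)
    (hρ1 : ∀ x1, (ρ1 x1).PosSemidef) (hρ1tr : (∑ x1, (ρ1 x1).trace) = 1)
    (hρ2 : ∀ x2, (ρ2 x2).PosSemidef) (hρ2tr : (∑ x2, (ρ2 x2).trace) = 1) :
    ∃ G : (Fin n2 → Bool) → Matrix (Fin d2) (Fin d2) ℂ,
      (∀ z2, (G z2).PosSemidef) ∧ (∑ z2, G z2) = 1 ∧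
      ((2:ℝ)^m)⁻¹ *
        (∑ y : Fin m → Bool, ∑ x1,
          traceNorm ((∑ x2 ∈ Finset.univ.filter (fun x2 => Ext x1 x2 = y),
              ρ1 x1 ⊗ₖ ρ2 x2)
            - ((2:ℝ)^m)⁻¹ • ∑ x2, ρ1 x1 ⊗ₖ ρ2 x2))^2
      ≤ ∑ x1, ∑ x2, ∑ z2, ∑ y : Fin m → Bool,
          ((if Ext x1 x2 = y then (1:ℝ) else 0) - ((2:ℝ)^m)⁻¹) *
          ((if Ext x1 z2 = y then (1:ℝ) else 0) - ((2:ℝ)^m)⁻¹) *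
          ((ρ1 x1).trace.re * ((ρ2 x2) * G z2).trace.re) := by
  refine ⟨prettyGoodMeasurement ρ2, posSemidef_prettyGoodMeasurement hρ2,
    sum_prettyGoodMeasurement hρ2, ?_⟩
  set c : (Fin n1 → Bool) → (Fin m → Bool) → (Fin n2 → Bool) → ℝ :=
    fun x1 y x2 => (if Ext x1 x2 = y then (1:ℝ) else 0) - ((2:ℝ)^m)⁻¹
  have hp (x1) : 0 ≤ (ρ1 x1).trace.re := (Complex.nonneg_iff.mp (hρ1 x1).trace_nonneg).1
  have hp1 : ∑ x1, (ρ1 x1).trace.re = 1 := by rw [← Complex.re_sum, hρ1tr, Complex.one_re]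
  have hσ1 : (∑ x2, ρ2 x2).trace.re = 1 := by rw [trace_sum, hρ2tr, Complex.one_re]
  have hcard : (Fintype.card (Fin m → Bool) : ℝ) = 2 ^ m := by simp
  have hCS := inv_card_mul_sq_sum_sum_le hp fun y x1 => traceNorm (∑ x2, c x1 y x2 • ρ2 x2)
  rw [hp1, one_mul, hcard] at hCS
  simp_rw [Finset.sum_filter_sub_smul_sum, ← kronecker_sum_smul,
    traceNorm_kronecker_of_posSemidef (hρ1 _)]
  refine hCS.trans ?_
  calc ∑ y, ∑ x1, (ρ1 x1).trace.re * traceNorm (∑ x2, c x1 y x2 • ρ2 x2) ^ 2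
      ≤ ∑ y, ∑ x1, (ρ1 x1).trace.re * ∑ x2, ∑ z2,
          c x1 y x2 * c x1 y z2 * (ρ2 x2 * prettyGoodMeasurement ρ2 z2).trace.re := by
        gcongr with y _ x1 _
        · exact hp x1
        · simpa only [hσ1, one_mul] using
            traceNorm_sq_le_sum_sum_mul_re_trace_mul_prettyGoodMeasurement hρ2 (c x1 y)
    _ = _ := by
        simp only [Finset.mul_sum, mul_left_comm _ (ρ1 _).trace.re]
        rw [Finset.sum_comm (s := Finset.univ (α := Fin m → Bool))]
        exact Finset.sum_congr rfl fun x1 _ => Finset.sum_comm_cycle.symm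
end
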